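/- arXiv:math/9804063 — 2 statements merged into one kernel-verified Lean document; each statement's English description precedes it below -/
import Mathlib

section
/- Let ξ be a countable ordinal with ξ ≥ 1, M an infinite subset of ℕ, and ℒ a ξ-uniform family on M. Then there exists an infinite subset L of M such that ℒ ∩ [L]^{<ω} is Sperner. -/
open Ordinal Filter Set

/-- `FinLT s t` : every element of `s` is smaller than every element of `t`
(i.e. `max s < min t`, vacuously true if one of them is empty). -/
def FinLT (s t : Finset ℕ) : Prop := ∀ a ∈ s, ∀ b ∈ t, a < b

/-- `s` is an initial segment of `t`  (`s ⪯ t`). -/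
def InitSeg (s t : Finset ℕ) : Prop :=
  s ⊆ t ∧ ∀ a ∈ t, ∀ b ∈ s, a ≤ b → a ∈ s

/-- `s` is a proper initial segment of `t`  (`s ≺ t`). -/
def PInitSeg (s t : Finset ℕ) : Prop := InitSeg s t ∧ s ≠ t

/-- `[M]^{<ω}` : the finite subsets of `M`. -/
def FinSubs (M : Set ℕ) : Set (Finset ℕ) := {s | ↑s ⊆ M}

/-- `ℒ(m) = {s : {m} ∪ s ∈ ℒ and {m} < s}`. -/
def famAt (L : Set (Finset ℕ)) (m : ℕ) : Set (Finset ℕ) :=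
  {s | insert m s ∈ L ∧ ∀ a ∈ s, m < a}

/-- `ℒ*` : the family of initial segments of elements of `ℒ`. -/
def famStar (L : Set (Finset ℕ)) : Set (Finset ℕ) := {t | ∃ s ∈ L, InitSeg t s}

/-- `ℒ_*` : the family of subsets of elements of `ℒ`. -/
def famSub (L : Set (Finset ℕ)) : Set (Finset ℕ) := {t | ∃ s ∈ L, t ⊆ s}

/-- A family is Sperner if no element is a proper subset of another. -/
def Sperner (L : Set (Finset ℕ)) : Prop := ¬ ∃ s ∈ L, ∃ t ∈ L, s ⊂ t

/-- A family is hereditary if it is closed under taking subsets. -/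
def Hereditary (F : Set (Finset ℕ)) : Prop := ∀ s ∈ F, ∀ t ⊆ s, t ∈ F

/-- `IsUniform ξ ℒ M` : `ℒ` is a `ξ`-uniform family on `M`. -/
inductive IsUniform : Ordinal.{0} → Set (Finset ℕ) → Set ℕ → Prop
  | zero (M : Set ℕ) : IsUniform 0 {(∅ : Finset ℕ)} M
  | succ (ζ : Ordinal.{0}) (L : Set (Finset ℕ)) (M : Set ℕ)
      (hsub : L ⊆ FinSubs M) (hne : (∅ : Finset ℕ) ∉ L)
      (h : ∀ m ∈ M, IsUniform ζ (famAt L m) (M ∩ Set.Ioi m)) :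
      IsUniform (ζ + 1) L M
  | limit (ξ : Ordinal.{0}) (L : Set (Finset ℕ)) (M : Set ℕ)
      (hlim : Order.IsSuccLimit ξ)
      (hsub : L ⊆ FinSubs M) (hne : (∅ : Finset ℕ) ∉ L)
      (ξm : ℕ → Ordinal.{0})
      (hmono : ∀ m ∈ M, ∀ n ∈ M, m < n → ξm m < ξm n)
      (hlt : ∀ m ∈ M, ξm m < ξ)
      (hsup : ∀ β < ξ, ∃ m ∈ M, β ≤ ξm m)
      (h : ∀ m ∈ M, IsUniform (ξm m) (famAt L m) (M ∩ Set.Ioi m)) :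
      IsUniform ξ L M

/-- The characteristic function of a finite set, as an element of the
product space `ℕ → Bool` (i.e. `2^ℕ`). -/
def toChar (s : Finset ℕ) : ℕ → Bool := fun n => decide (n ∈ s)

/-- A family of finite subsets of `ℕ` is pointwise closed if its image in `2^ℕ`
(under characteristic functions) is closed in the product topology. -/
def PtwiseClosed (F : Set (Finset ℕ)) : Prop := IsClosed (toChar '' F)

/-- The first strong Cantor--Bendixson derivative of `F` on `M`:
the set of `A ∈ F ∩ [M]^{<ω}` such that `A` is a cluster point (in `2^ℕ`) of
`{B ∈ F : B ⊆ A ∪ L}` for every infinite `L ⊆ M`. -/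
def derivOne (M : Set ℕ) (F : Set (Finset ℕ)) : Set (Finset ℕ) :=
  {A | A ∈ F ∧ ↑A ⊆ M ∧ ∀ L : Set ℕ, L ⊆ M → L.Infinite →
    AccPt (toChar A) (𝓟 (toChar '' {B | B ∈ F ∧ ↑B ⊆ ↑A ∪ L}))}

/-- The iterated strong Cantor--Bendixson derivatives `(F)^ξ_M`. -/
noncomputable def CBDeriv (F : Set (Finset ℕ)) (M : Set ℕ) (o : Ordinal.{0}) :
    Set (Finset ℕ) :=
  Ordinal.limitRecOn o F (fun _ ih => derivOne M ih)
    (fun o _ ih => ⋂ (β : Ordinal.{0}) (h : β < o), ih β h)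

/-- The strong Cantor--Bendixson index `s_M(F)` : the least ordinal `ξ`
with `(F)^ξ_M = ∅`. -/
noncomputable def CBIndex (F : Set (Finset ℕ)) (M : Set ℕ) : Ordinal.{0} :=
  sInf {o : Ordinal.{0} | CBDeriv F M o = ∅}

/-!
Uniform families are Ramsey (Nash-Williams): for every finite colouring of `[M]^{<ω}` and every
infinite `N ⊆ M` there is an infinite `L ⊆ N` on which `ℒ ∩ [L]^{<ω}` is monochromatic. This is
proved by induction on uniformity, fusing the infinite sets given for the families `ℒ(m)` along a
diagonal sequence. Colour `s` by whether some member of `ℒ` is a proper subset of `s`. On a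
monochromatic `L` the colour cannot be "yes", since a member of `ℒ ∩ [L]^{<ω}` of least size has
no such subset; so it is "no", which says that `ℒ ∩ [L]^{<ω}` is Sperner.
-/

def IsRamseyOn (𝓛 : Set (Finset ℕ)) (M : Set ℕ) (C : Type*) : Prop :=
  ∀ N ⊆ M, N.Infinite → ∀ c : Finset ℕ → C,
    ∃ L ⊆ N, L.Infinite ∧ ∃ b, ∀ s ∈ 𝓛 ∩ FinSubs L, c s = b

theorem erase_min'_mem_famAt {𝓛 : Set (Finset ℕ)} {s : Finset ℕ} (hs : s ∈ 𝓛)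
    (hne : s.Nonempty) : s.erase (s.min' hne) ∈ famAt 𝓛 (s.min' hne) := by
  refine ⟨by rwa [Finset.insert_erase (s.min'_mem hne)], fun a ha => ?_⟩
  exact lt_of_le_of_ne (s.min'_le a (Finset.mem_of_mem_erase ha)) (Finset.ne_of_mem_erase ha).symm

/-- Diagonal fusion: `n k` is the least element of the `k`-th set in the chain obtained by
iterating `step` from `N`. -/
theorem exists_strictMono_forall_tail {N : Set ℕ} {Q : ℕ → Set ℕ → Prop} (hN : N.Infinite)
    (hQ : ∀ m S T, T ⊆ S → Q m S → Q m T)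
    (step : ∀ S ⊆ N, S.Infinite → ∃ T ⊆ S ∩ Ioi (sInf S), T.Infinite ∧ Q (sInf S) T) :
    ∃ n : ℕ → ℕ, StrictMono n ∧ (∀ k, n k ∈ N) ∧ ∀ k, Q (n k) (n '' Ioi k) := by
  have step' : ∀ S : {S : Set ℕ // S ⊆ N ∧ S.Infinite}, ∃ T : {S : Set ℕ // S ⊆ N ∧ S.Infinite},
      T.1 ⊆ S.1 ∩ Ioi (sInf S.1) ∧ Q (sInf S.1) T.1 := fun S => by
    obtain ⟨T, hTS, hT, hQT⟩ := step S.1 S.2.1 S.2.2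
    exact ⟨⟨T, fun x hx => S.2.1 (hTS hx).1, hT⟩, hTS, hQT⟩
  choose next hnext hQnext using step'
  set S := fun k => next^[k] ⟨N, subset_rfl, hN⟩
  have hS_succ : ∀ k, S (k + 1) = next (S k) := fun k => Function.iterate_succ_apply' ..
  set n := fun k => sInf (S k).1
  have hn_mem : ∀ k, n k ∈ (S k).1 := fun k => Nat.sInf_mem (S k).2.2.nonempty
  have hS_anti : Antitone fun k => (S k).1 :=
    antitone_nat_of_succ_le fun k x hx => (hnext (S k) (hS_succ k ▸ hx)).1
  have hn_succ : ∀ k, n k < n (k + 1) := fun k =>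
    (hnext (S k) (hS_succ k ▸ hn_mem (k + 1))).2
  have hn_mono : StrictMono n := strictMono_nat_of_lt_succ hn_succ
  refine ⟨n, hn_mono, fun k => (S k).2.1 (hn_mem k), fun k => ?_⟩
  have htail : n '' Ioi k ⊆ (next (S k)).1 := by
    rintro _ ⟨j, hkj, rfl⟩
    exact hS_succ k ▸ hS_anti (Nat.succ_le_of_lt hkj) (hn_mem j)
  exact hQ _ _ _ htail (hQnext (S k))

theorem IsRamseyOn.of_famAt {𝓛 : Set (Finset ℕ)} {M : Set ℕ} {C : Type*} [Finite C]
    (hne : ∅ ∉ 𝓛) (h : ∀ m ∈ M, IsRamseyOn (famAt 𝓛 m) (M ∩ Ioi m) C) :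
    IsRamseyOn 𝓛 M C := by
  intro N hNM hN c
  obtain ⟨n, hn_mono, hnN, hn_tail⟩ := exists_strictMono_forall_tail
    (Q := fun m T => ∃ b, ∀ t ∈ famAt 𝓛 m ∩ FinSubs T, c (insert m t) = b) hN
    (fun m S T hTS ⟨b, hb⟩ => ⟨b, fun t ht => hb t ⟨ht.1, ht.2.trans hTS⟩⟩)
    (fun S hSN hS => by
      have hSm : sInf S ∈ S := Nat.sInf_mem hS.nonempty
      have hS' : (S ∩ Ioi (sInf S)).Infinite := by
        simpa only [sdiff_eq, compl_Iic] using hS.sdiff (finite_Iic (sInf S))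
      obtain ⟨T, hTS, hT, b, hb⟩ := h _ (hNM (hSN hSm)) _
        (fun x hx => ⟨hNM (hSN hx.1), hx.2⟩) hS' fun t => c (insert (sInf S) t)
      exact ⟨T, hTS, hT, b, hb⟩)
  choose b hb using hn_tail
  obtain ⟨b₀, hK⟩ := Finite.exists_infinite_fiber b
  refine ⟨n '' (b ⁻¹' {b₀}), ?_, (Set.infinite_coe_iff.mp hK).image hn_mono.injective.injOn,
    b₀, fun s ⟨hs, hsL⟩ => ?_⟩
  · rintro _ ⟨k, -, rfl⟩
    exact hnN k
  have hsne : s.Nonempty := Finset.nonempty_iff_ne_empty.mpr fun h => hne (h ▸ hs)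
  obtain ⟨k, hk, hkmin⟩ := hsL (s.min'_mem hsne)
  have hfam := erase_min'_mem_famAt hs hsne
  rw [← hkmin] at hfam
  have htail : ↑(s.erase (n k)) ⊆ n '' Ioi k := by
    intro a ha
    obtain ⟨j, -, rfl⟩ := hsL (Finset.mem_of_mem_erase ha)
    exact ⟨j, hn_mono.lt_iff_lt.mp (hfam.2 _ ha), rfl⟩
  rw [← hk, ← hb k _ ⟨hfam, htail⟩, hkmin, Finset.insert_erase (s.min'_mem hsne)]

theorem IsUniform.isRamseyOn {ξ : Ordinal.{0}} {𝓛 : Set (Finset ℕ)} {M : Set ℕ}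
    (h : IsUniform ξ 𝓛 M) (C : Type*) [Finite C] : IsRamseyOn 𝓛 M C := by
  induction h with
  | zero M =>
    intro N _ hN c
    exact ⟨N, subset_rfl, hN, c ∅, fun s hs => congrArg c hs.1⟩
  | succ _ _ _ _ hne _ ih => exact IsRamseyOn.of_famAt hne ih
  | limit _ _ _ _ _ hne _ _ _ _ _ ih => exact IsRamseyOn.of_famAt hne ih

theorem IsRamseyOn.exists_sperner {𝓛 : Set (Finset ℕ)} {M : Set ℕ} (h : IsRamseyOn 𝓛 M Prop)
    (hM : M.Infinite) : ∃ L ⊆ M, L.Infinite ∧ Sperner (𝓛 ∩ FinSubs L) := by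
  obtain ⟨L, hLM, hL, b, hb⟩ := h M subset_rfl hM fun s => ∃ t ∈ 𝓛, t ⊂ s
  refine ⟨L, hLM, hL, ?_⟩
  by_cases hb₀ : b
  · rintro ⟨s, hs, -⟩
    obtain ⟨s, hs, hmin⟩ := wellFounded_lt.has_min _ ⟨s, hs⟩
    obtain ⟨t, ht, hts⟩ := (hb s hs).mpr hb₀
    exact hmin t ⟨ht, (Finset.coe_subset.mpr hts.1).trans hs.2⟩ hts
  · rintro ⟨s, hs, t, ht, hst⟩
    exact hb₀ ((hb t ht).mp ⟨s, hs.1, hst⟩)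

theorem exists_sperner_restriction_general (ξ : Ordinal.{0})
    (M : Set ℕ) (hM : M.Infinite)
    (𝓛 : Set (Finset ℕ)) (h𝓛 : IsUniform ξ 𝓛 M) :
    ∃ L : Set ℕ, L ⊆ M ∧ L.Infinite ∧ Sperner (𝓛 ∩ FinSubs L) :=
  (h𝓛.isRamseyOn Prop).exists_sperner hM

/-- **Corollary 2.5.** If `1 ≤ ξ` and `ℒ` is a `ξ`-uniform family on the
infinite set `M`, then there is an infinite `L ⊆ M` such that `ℒ ∩ [L]^{<ω}`
is Sperner. -/
theorem exists_sperner_restriction (ξ : Ordinal.{0}) (hξ1 : 1 ≤ ξ)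
    (hξ : ξ.card ≤ Cardinal.aleph0)
    (M : Set ℕ) (hM : M.Infinite)
    (𝓛 : Set (Finset ℕ)) (h𝓛 : IsUniform ξ 𝓛 M) :
    ∃ L : Set ℕ, L ⊆ M ∧ L.Infinite ∧ Sperner (𝓛 ∩ FinSubs L) :=
  exists_sperner_restriction_general ξ M hM 𝓛 h𝓛
end

section
/- Let M be an infinite subset of ℕ, ℱ a hereditary family of finite subsets of M, and ℒ a ξ-uniform family on M for some countable ordinal ξ. Then for every infinite subset M₁ of M there exists an infinite subset L of M₁ such that either ℒ_* ∩ [L]^{<ω} ⊆ ℱ, or ℱ ∩ [L]^{<ω} ⊆ ℒ* \ ℒ. -/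
open Ordinal Filter Set

/-!
Induction on `ξ`. Write `t = {m} ∪ t'` with `m = min t`: membership of `t` in `ℒ*` or `ℱ` is
membership of `t'` in the sections `ℒ(m)*` and `ℱ(m)`, which are handled by the induction hypothesis
on `M ∩ (m, ∞)`; a diagonal argument makes this work simultaneously for all `m ∈ L`, and the
infinitely many `m` for which the same alternative holds give `L`. This proves the dichotomy with
`ℒ*` in place of `ℒ_*`. Passing to a further subset makes `ℒ_* ∩ [L]^{<ω} ⊆ ℒ*`: a subset `t` of
`s ∈ ℒ` with `min t = m` lies, after removing `m`, in the section `ℒ(c)` of `ℒ` at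
`c = s ∩ [0, m]`, which is uniform of an index smaller than that of `ℒ(m)` unless `c = {m}`, and a
uniform family of smaller index is dominated by one of larger index on a suitable infinite set.
-/

theorem Set.Infinite.inter_Ioi {α : Type*} [LinearOrder α] [LocallyFiniteOrderBot α] {s : Set α}
    (hs : s.Infinite) (m : α) : (s ∩ Ioi m).Infinite :=
  (hs.sdiff (finite_Iic m)).mono fun _ hx => ⟨hx.1, Set.notMem_Iic.1 hx.2⟩

theorem Set.inter_Ioi_inter_Ioi_of_le {α : Type*} [LinearOrder α] {M : Set α} {a b : α}
    (h : a ≤ b) : M ∩ Ioi a ∩ Ioi b = M ∩ Ioi b := by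
  rw [inter_assoc, Ioi_inter_Ioi, sup_of_le_right h]

def DenseBelow (X : Set ℕ) (P : Set ℕ → Prop) : Prop :=
  ∀ N ⊆ X, N.Infinite → ∃ L ⊆ N, L.Infinite ∧ P L

namespace DenseBelow

variable {X Y : Set ℕ} {P Q : Set ℕ → Prop}

theorem of_forall (h : ∀ L, P L) : DenseBelow X P :=
  fun N _ hN => ⟨N, subset_rfl, hN, h N⟩

theorem mono (hXY : X ⊆ Y) (h : DenseBelow Y P) : DenseBelow X P :=
  fun N hN => h N (hN.trans hXY)

theorem of_inter_Ioi (k : ℕ) (h : DenseBelow (X ∩ Ioi k) P) : DenseBelow X P := by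
  intro N hN hNinf
  obtain ⟨L, hL, hLinf, hP⟩ := h (N ∩ Ioi k) (inter_subset_inter_left _ hN) (hNinf.inter_Ioi k)
  exact ⟨L, hL.trans inter_subset_left, hLinf, hP⟩

theorem and (hP : DenseBelow X P) (hQ : DenseBelow X Q) (hP' : Antitone P) :
    DenseBelow X fun L => P L ∧ Q L := by
  intro N hN hNinf
  obtain ⟨L₁, hL₁, hL₁inf, hPL₁⟩ := hP N hN hNinf
  obtain ⟨L, hL, hLinf, hQL⟩ := hQ L₁ (hL₁.trans hN) hL₁inf
  exact ⟨L, hL.trans hL₁, hLinf, hP' hL hPL₁, hQL⟩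

theorem finset_forall {ι : Type*} (s : Finset ι) {P : ι → Set ℕ → Prop}
    (hanti : ∀ i, Antitone (P i)) (h : ∀ i ∈ s, DenseBelow X (P i)) :
    DenseBelow X fun L => ∀ i ∈ s, P i L := by
  classical
  induction s using Finset.induction_on with
  | empty => exact of_forall fun _ i hi => absurd hi (Finset.notMem_empty i)
  | insert i s _ ih =>
    have hanti_s : Antitone fun L => ∀ j ∈ s, P j L :=
      fun _ _ hLL' hL' j hj => hanti j hLL' (hL' j hj)
    simpa only [Finset.forall_mem_insert, and_comm] using
      (ih fun j hj => h j (Finset.mem_insert_of_mem hj)).and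
        (h i (Finset.mem_insert_self i s)) hanti_s

theorem diagonal {P : ℕ → Set ℕ → Prop} (hanti : ∀ m, Antitone (P m))
    (h : ∀ m ∈ X, DenseBelow (X ∩ Ioi m) (P m)) :
    DenseBelow X fun L => ∀ m ∈ L, P m (L ∩ Ioi m) := by
  intro N hN hNinf
  have step : ∀ K : {K : Set ℕ // K ⊆ X ∧ K.Infinite}, ∃ m ∈ K.1,
      ∃ K' : {K' : Set ℕ // K' ⊆ X ∧ K'.Infinite}, K'.1 ⊆ K.1 ∩ Ioi m ∧ P m K'.1 := by
    rintro ⟨K, hKX, hK⟩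
    obtain ⟨m, hm⟩ := hK.nonempty
    obtain ⟨K', hK', hK'inf, hP⟩ :=
      h m (hKX hm) (K ∩ Ioi m) (inter_subset_inter_left _ hKX) (hK.inter_Ioi m)
    exact ⟨m, hm, ⟨K', hK'.trans (inter_subset_left.trans hKX), hK'inf⟩, hK', hP⟩
  choose a ha next hnext hP using step
  let K : ℕ → {K : Set ℕ // K ⊆ X ∧ K.Infinite} := fun n => next^[n] ⟨N, hN, hNinf⟩
  have hK_succ : ∀ n, K (n + 1) = next (K n) := fun n => Function.iterate_succ_apply' _ _ _
  have hK_anti : Antitone fun n => (K n).1 := antitone_nat_of_succ_le fun n => by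
    rw [hK_succ]; exact (hnext _).trans inter_subset_left
  have ha_mono : StrictMono fun n => a (K n) := strictMono_nat_of_lt_succ fun n => by
    have := hnext (K n) (ha (next (K n)))
    rw [← hK_succ] at this
    exact this.2
  refine ⟨range fun n => a (K n), ?_, infinite_range_of_injective ha_mono.injective, ?_⟩
  · rintro _ ⟨n, rfl⟩
    exact hK_anti (Nat.zero_le n) (ha (K n))
  · rintro _ ⟨n, rfl⟩
    refine hanti _ ?_ (hP (K n))
    rintro _ ⟨⟨j, rfl⟩, hj⟩
    rw [← hK_succ]
    exact hK_anti (ha_mono.lt_iff_lt.1 hj) (ha (K j))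

end DenseBelow

/-- The iterated section `ℒ(m₁)(m₂)⋯(mₖ)` of `ℒ` at `c = {m₁ < ⋯ < mₖ}`. -/
def famAtFinset (A : Set (Finset ℕ)) (c : Finset ℕ) : Set (Finset ℕ) :=
  {u | c ∪ u ∈ A ∧ FinLT c u}

section Families

open Finset

theorem famAtFinset_singleton (A : Set (Finset ℕ)) (m : ℕ) : famAtFinset A {m} = famAt A m := by
  ext u
  simp only [famAtFinset, famAt, FinLT, Set.mem_ofPred_eq, Finset.mem_singleton, forall_eq,
    Finset.insert_eq]

theorem famAtFinset_insert (A : Set (Finset ℕ)) {a : ℕ} {c : Finset ℕ} (ha : ∀ x ∈ c, a < x) :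
    famAtFinset A (insert a c) = famAtFinset (famAt A a) c := by
  ext u
  simp only [famAtFinset, famAt, FinLT, Set.mem_ofPred_eq]
  grind

theorem famAtFinset_empty (c : Finset ℕ) : famAtFinset ∅ c = ∅ := by
  simp [famAtFinset]

theorem famSub_empty : famSub ∅ = ∅ := by
  simp [famSub]

theorem empty_mem_famStar {B : Set (Finset ℕ)} (hB : B.Nonempty) : ∅ ∈ famStar B :=
  let ⟨b, hb⟩ := hB
  ⟨b, hb, empty_subset b, fun _ _ _ h => absurd h (notMem_empty _)⟩

theorem famAt_eq_empty_of_notMem {A : Set (Finset ℕ)} {M : Set ℕ} {m : ℕ} (hA : A ⊆ FinSubs M)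
    (hm : m ∉ M) : famAt A m = ∅ :=
  Set.eq_empty_of_forall_notMem fun s hs => hm (hA hs.1 (mem_insert_self m s))

theorem famAt_diff (G H : Set (Finset ℕ)) (m : ℕ) : famAt (G \ H) m = famAt G m \ famAt H m := by
  ext u
  simp only [famAt, Set.mem_sdiff, Set.mem_ofPred_eq]
  tauto

theorem famAt_famStar (L : Set (Finset ℕ)) (m : ℕ) :
    famAt (famStar L) m = famStar (famAt L m) := by
  ext u
  simp only [famAt, famStar, InitSeg, Set.mem_ofPred_eq]
  constructor
  · rintro ⟨⟨s, hs, hus, hinit⟩, hmu⟩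
    have hmin : ∀ a ∈ s.erase m, m < a := fun a ha => by
      by_contra hle
      rcases mem_insert.1 (hinit a (mem_of_mem_erase ha) m (mem_insert_self m u) (not_lt.1 hle))
        with rfl | hau
      exacts [ne_of_mem_erase ha rfl, hle (hmu a hau)]
    refine ⟨s.erase m, ⟨?_, hmin⟩,
      fun a ha => mem_erase.2 ⟨(hmu a ha).ne', hus (mem_insert_of_mem ha)⟩, fun a ha b hb hab => ?_⟩
    · rwa [insert_erase (hus (mem_insert_self m u))]
    · exact (mem_insert.1 (hinit a (mem_of_mem_erase ha) b (mem_insert_of_mem hb) hab)).resolve_left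
        (ne_of_mem_erase ha)
  · rintro ⟨v, ⟨hv, hmv⟩, huv, hinit⟩
    refine ⟨⟨insert m v, hv, insert_subset_insert m huv, fun a ha b hb hab => ?_⟩,
      fun a ha => hmv a (huv ha)⟩
    rcases mem_insert.1 ha with rfl | hav
    · exact mem_insert_self _ _
    rcases mem_insert.1 hb with rfl | hbu
    · exact absurd hab (not_le.2 (hmv a hav))
    · exact mem_insert_of_mem (hinit a hav b hbu hab)

theorem exists_mem_famSub_famAtFinset {A : Set (Finset ℕ)} {m : ℕ} {u : Finset ℕ}
    (hu : u ∈ famAt (famSub A) m) : ∃ c ⊆ Finset.Iic m, m ∈ c ∧ u ∈ famSub (famAtFinset A c) := by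
  obtain ⟨⟨s, hs, hus⟩, hmu⟩ := hu
  refine ⟨s.filter (· ≤ m), fun a ha => mem_Iic.2 (mem_filter.1 ha).2,
    mem_filter.2 ⟨hus (mem_insert_self m u), le_rfl⟩, s.filter (¬ · ≤ m), ⟨?_, ?_⟩, ?_⟩
  · rwa [filter_union_filter_not_eq]
  · exact fun a ha b hb => (mem_filter.1 ha).2.trans_lt (not_le.1 (mem_filter.1 hb).2)
  · exact fun a ha => mem_filter.2 ⟨hus (mem_insert_of_mem ha), not_le.2 (hmu a ha)⟩

theorem Hereditary.famAt {F : Set (Finset ℕ)} (hF : Hereditary F) (m : ℕ) :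
    Hereditary (famAt F m) :=
  fun _ hs _ hts => ⟨hF _ hs.1 _ (insert_subset_insert m hts), fun a ha => hs.2 a (hts ha)⟩

theorem antitone_inter_finSubs_subset (G H : Set (Finset ℕ)) :
    Antitone fun L => G ∩ FinSubs L ⊆ H :=
  fun _ _ hLL' h _ ht => h ⟨ht.1, ht.2.trans hLL'⟩

theorem erase_min'_mem_famAt_iff {G : Set (Finset ℕ)} {t : Finset ℕ} (ht : t.Nonempty) :
    t.erase (t.min' ht) ∈ famAt G (t.min' ht) ↔ t ∈ G := by
  simp only [famAt, Set.mem_ofPred_eq, insert_erase (t.min'_mem ht)]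
  exact and_iff_left fun a ha => t.min'_lt_of_mem_erase_min' ht ha

theorem inter_finSubs_subset_of_famAt {G H : Set (Finset ℕ)} {L : Set ℕ} (h₀ : ∅ ∈ G → ∅ ∈ H)
    (h : ∀ m ∈ L, famAt G m ∩ FinSubs (L ∩ Ioi m) ⊆ famAt H m) : G ∩ FinSubs L ⊆ H := by
  rintro t ⟨htG, htL⟩
  obtain rfl | ht := t.eq_empty_or_nonempty
  · exact h₀ htG
  have hsub : t.erase (t.min' ht) ∈ FinSubs (L ∩ Ioi (t.min' ht)) :=
    fun a ha => ⟨htL (mem_of_mem_erase ha), t.min'_lt_of_mem_erase_min' ht ha⟩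
  exact (erase_min'_mem_famAt_iff ht).1
    (h _ (htL (t.min'_mem ht)) ⟨(erase_min'_mem_famAt_iff ht).2 htG, hsub⟩)

theorem denseBelow_famSub_subset_famStar_of_sections {A B : Set (Finset ℕ)} {X : Set ℕ}
    (hB : B.Nonempty)
    (h : ∀ m ∈ X, ∀ c ⊆ Finset.Iic m, m ∈ c → DenseBelow (X ∩ Ioi m) fun L =>
      famSub (famAtFinset A c) ∩ FinSubs L ⊆ famStar (famAt B m)) :
    DenseBelow X fun L => famSub A ∩ FinSubs L ⊆ famStar B := by
  have hdiag := DenseBelow.diagonal (X := X)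
    (P := fun m L => ∀ c ∈ (Finset.Iic m).powerset.filter (m ∈ ·),
      famSub (famAtFinset A c) ∩ FinSubs L ⊆ famStar (famAt B m))
    (fun m _ _ hLL' hL c hc => antitone_inter_finSubs_subset _ _ hLL' (hL c hc))
    fun m hm => DenseBelow.finset_forall _ (fun c => antitone_inter_finSubs_subset _ _)
      fun c hc => by
        rw [mem_filter, Finset.mem_powerset] at hc
        exact h m hm c hc.1 hc.2
  refine fun N hN hNinf => (hdiag N hN hNinf).imp fun L ⟨hLN, hLinf, hL⟩ =>
    ⟨hLN, hLinf, inter_finSubs_subset_of_famAt (fun _ => empty_mem_famStar hB) fun m hm => ?_⟩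
  rw [famAt_famStar]
  rintro u ⟨hu, huL⟩
  obtain ⟨c, hc, hmc, huc⟩ := exists_mem_famSub_famAtFinset hu
  exact hL m hm c (mem_filter.2 ⟨Finset.mem_powerset.2 hc, hmc⟩) ⟨huc, huL⟩

end Families

namespace IsUniform

variable {ξ : Ordinal.{0}} {A : Set (Finset ℕ)} {M : Set ℕ}

theorem subset_finSubs (h : IsUniform ξ A M) : A ⊆ FinSubs M := by
  cases h with
  | zero => rintro _ rfl; simp [FinSubs]
  | succ _ _ _ hsub => exact hsub
  | limit _ _ _ _ hsub => exact hsub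

theorem nonempty (h : IsUniform ξ A M) (hM : M.Infinite) : A.Nonempty := by
  induction h with
  | zero => exact Set.singleton_nonempty _
  | succ _ _ M _ _ _ ih | limit _ _ M _ _ _ _ _ _ _ _ ih =>
    obtain ⟨m, hm⟩ := hM.nonempty
    obtain ⟨s, hs, -⟩ := ih m hm (hM.inter_Ioi m)
    exact ⟨_, hs⟩

theorem eq_zero_or_sections (h : IsUniform ξ A M) :
    (ξ = 0 ∧ A = {∅}) ∨ (∅ ∉ A ∧ ∃ σ : ℕ → Ordinal.{0}, MonotoneOn σ M ∧
      (∀ α < ξ, ∃ m₀, ∀ m ∈ M, m₀ ≤ m → α ≤ σ m) ∧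
      ∀ m ∈ M, σ m < ξ ∧ IsUniform (σ m) (famAt A m) (M ∩ Ioi m)) := by
  cases h with
  | zero => exact Or.inl ⟨rfl, rfl⟩
  | succ ζ _ _ _ hne h =>
    exact Or.inr ⟨hne, fun _ => ζ, monotoneOn_const,
      fun α hα => ⟨0, fun _ _ _ => Order.lt_add_one_iff.1 hα⟩,
      fun m hm => ⟨Order.lt_add_one_iff.2 le_rfl, h m hm⟩⟩
  | limit _ _ _ _ _ hne ξm hmono hlt hsup h =>
    have hmono' : MonotoneOn ξm M := fun a ha b hb hab =>
      hab.eq_or_lt.elim (fun e => e ▸ le_rfl) fun l => (hmono a ha b hb l).le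
    refine Or.inr ⟨hne, ξm, hmono', fun α hα => ?_, fun m hm => ⟨hlt m hm, h m hm⟩⟩
    obtain ⟨m₀, hm₀, hα'⟩ := hsup α hα
    exact ⟨m₀, fun m hm hle => hα'.trans (hmono' hm₀ hm hle)⟩

theorem famAt_eq_empty_or (h : IsUniform ξ A M) (m : ℕ) :
    famAt A m = ∅ ∨ ∃ δ < ξ, IsUniform δ (famAt A m) (M ∩ Ioi m) := by
  by_cases hm : m ∈ M
  swap
  · exact Or.inl (famAt_eq_empty_of_notMem h.subset_finSubs hm)
  rcases h.eq_zero_or_sections with ⟨-, rfl⟩ | ⟨-, σ, -, -, hσ⟩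
  · exact Or.inl (Set.eq_empty_of_forall_notMem fun s hs => Finset.insert_ne_empty m s hs.1)
  · exact Or.inr ⟨σ m, hσ m hm⟩

theorem famAtFinset_eq_empty_or (h : IsUniform ξ A M) {c : Finset ℕ} {m : ℕ}
    (hc : c ⊆ Finset.Iic m) (hmc : m ∈ c) :
    famAtFinset A c = ∅ ∨ ∃ δ < ξ, IsUniform δ (famAtFinset A c) (M ∩ Ioi m) := by
  induction c using Finset.induction_on_min generalizing ξ A M with
  | empty => simp at hmc
  | insert a s has ih =>
    obtain rfl | ⟨x, hx⟩ := s.eq_empty_or_nonempty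
    · obtain rfl : m = a := by simpa using hmc
      simpa [famAtFinset_singleton] using h.famAt_eq_empty_or m
    have ham : a < m := (has x hx).trans_le (Finset.mem_Iic.1 (hc (Finset.mem_insert_of_mem hx)))
    have hms : m ∈ s := (Finset.mem_insert.1 hmc).resolve_left ham.ne'
    rw [famAtFinset_insert A has]
    rcases h.famAt_eq_empty_or a with hempty | ⟨δ₀, hδ₀, hδ₀u⟩
    · rw [hempty, famAtFinset_empty]
      exact Or.inl rfl
    · refine (ih hδ₀u ((Finset.subset_insert a s).trans hc) hms).imp_right ?_
      rintro ⟨δ, hδ, hu⟩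
      exact ⟨δ, hδ.trans hδ₀, by rwa [inter_Ioi_inter_Ioi_of_le ham.le] at hu⟩

theorem denseBelow_famSub_subset_famStar_of_lt {β α : Ordinal.{0}} {B : Set (Finset ℕ)}
    {MB MA : Set ℕ} (hB : IsUniform β B MB) (hA : IsUniform α A MA) (hαβ : α < β) :
    DenseBelow MB fun L => famSub A ∩ FinSubs L ⊆ famStar B := by
  induction β using WellFoundedLT.induction generalizing B MB α A MA with
  | ind β ih =>
  rcases hB.eq_zero_or_sections with ⟨rfl, -⟩ | ⟨-, σ, -, hσcofinal, hσ⟩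
  · exact absurd hαβ zero_le.not_gt
  obtain ⟨m₀, hm₀⟩ := hσcofinal α hαβ
  intro N hN hNinf
  refine DenseBelow.of_inter_Ioi m₀ (denseBelow_famSub_subset_famStar_of_sections
    (hB.nonempty (hNinf.mono hN)) fun m hm c hc hmc => ?_) N hN hNinf
  rcases hA.famAtFinset_eq_empty_or hc hmc with hempty | ⟨δ, hδα, hδ⟩
  · exact DenseBelow.of_forall fun L => by simp [hempty, famSub_empty]
  · exact (ih (σ m) (hσ m hm.1).1 (hσ m hm.1).2 hδ (hδα.trans_le (hm₀ m hm.1 hm.2.le))).mono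
      (inter_subset_inter_left _ inter_subset_left)

theorem denseBelow_famSub_subset_famStar (h : IsUniform ξ A M) :
    DenseBelow M fun L => famSub A ∩ FinSubs L ⊆ famStar A := by
  induction ξ using WellFoundedLT.induction generalizing A M with
  | ind ξ ih =>
  rcases h.eq_zero_or_sections with ⟨-, rfl⟩ | ⟨-, σ, hσmono, -, hσ⟩
  · refine DenseBelow.of_forall fun L t ⟨⟨s, hs, hts⟩, _⟩ => ?_
    rw [Set.mem_singleton_iff.1 hs, Finset.subset_empty] at hts
    exact hts ▸ empty_mem_famStar (Set.singleton_nonempty ∅)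
  intro N hN hNinf
  refine denseBelow_famSub_subset_famStar_of_sections (h.nonempty (hNinf.mono hN))
    (fun m hm c hc hmc => ?_) N hN hNinf
  obtain rfl | hcm := eq_or_ne c {m}
  · rw [famAtFinset_singleton]
    exact ih _ (hσ m hm).1 (hσ m hm).2
  -- with `a = min c < m`, the section `A(c) = A(a)(c \ {a})` has index `< σ a ≤ σ m`
  have hc₀ : c.Nonempty := ⟨m, hmc⟩
  set a := c.min' hc₀
  have ham : a < m := (c.min'_le m hmc).lt_of_ne fun ham => hcm <|
    Finset.eq_singleton_iff_unique_mem.2 ⟨hmc, fun x hx =>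
      le_antisymm (Finset.mem_Iic.1 (hc hx)) (ham ▸ c.min'_le x hx)⟩
  have has : ∀ x ∈ c.erase a, a < x := fun x hx => c.min'_lt_of_mem_erase_min' hc₀ hx
  rw [← Finset.insert_erase (c.min'_mem hc₀), famAtFinset_insert A has]
  by_cases haM : a ∈ M
  swap
  · rw [famAt_eq_empty_of_notMem h.subset_finSubs haM, famAtFinset_empty]
    exact DenseBelow.of_forall fun L => by simp [famSub_empty]
  rcases (hσ a haM).2.famAtFinset_eq_empty_or ((Finset.erase_subset a c).trans hc)
    (Finset.mem_erase.2 ⟨ham.ne', hmc⟩) with hempty | ⟨δ, hδ, hδu⟩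
  · exact DenseBelow.of_forall fun L => by simp [hempty, famSub_empty]
  rw [inter_Ioi_inter_Ioi_of_le ham.le] at hδu
  exact (hσ m hm).2.denseBelow_famSub_subset_famStar_of_lt hδu
    (hδ.trans_le (hσmono haM hm ham.le))

theorem denseBelow_famStar_dichotomy (h : IsUniform ξ A M) {F : Set (Finset ℕ)}
    (hF : Hereditary F) :
    DenseBelow M fun L => famStar A ∩ FinSubs L ⊆ F ∨ F ∩ FinSubs L ⊆ famStar A \ A := by
  induction ξ using WellFoundedLT.induction generalizing A M F with
  | ind ξ ih =>
  by_cases hF₀ : ∅ ∈ F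
  swap
  · exact DenseBelow.of_forall fun L => Or.inr fun t ht =>
      absurd (hF t ht.1 ∅ (Finset.empty_subset t)) hF₀
  rcases h.eq_zero_or_sections with ⟨-, rfl⟩ | ⟨hA₀, σ, -, -, hσ⟩
  · refine DenseBelow.of_forall fun L => Or.inl fun t ⟨⟨s, hs, hts⟩, _⟩ => ?_
    rw [Set.mem_singleton_iff.1 hs, InitSeg, Finset.subset_empty] at hts
    rwa [hts.1]
  intro N hN hNinf
  obtain ⟨L₀, hL₀N, hL₀inf, hL₀⟩ := DenseBelow.diagonal
    (P := fun m L => famAt (famStar A) m ∩ FinSubs L ⊆ famAt F m ∨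
      famAt F m ∩ FinSubs L ⊆ famAt (famStar A \ A) m)
    (fun m _ _ hLL' => Or.imp (antitone_inter_finSubs_subset _ _ hLL')
      (antitone_inter_finSubs_subset _ _ hLL'))
    (fun m hm => by
      simpa only [famAt_famStar, famAt_diff] using ih _ (hσ m hm).1 (hσ m hm).2 (hF.famAt m))
    N hN hNinf
  rw [← inter_union_sdiff L₀ {m | famAt (famStar A) m ∩ FinSubs (L₀ ∩ Ioi m) ⊆ famAt F m},
    infinite_union] at hL₀inf
  rcases hL₀inf with hinf | hinf
  · refine ⟨_, inter_subset_left.trans hL₀N, hinf,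
      Or.inl (inter_finSubs_subset_of_famAt (fun _ => hF₀) fun m hm => ?_)⟩
    exact antitone_inter_finSubs_subset _ _ (inter_subset_inter_left _ inter_subset_left) hm.2
  · refine ⟨_, sdiff_subset.trans hL₀N, hinf, Or.inr (inter_finSubs_subset_of_famAt
      (fun _ => ⟨empty_mem_famStar (h.nonempty (hNinf.mono hN)), hA₀⟩) fun m hm => ?_)⟩
    exact antitone_inter_finSubs_subset _ _ (inter_subset_inter_left _ sdiff_subset)
      ((hL₀ m hm.1).resolve_left hm.2)

end IsUniform

theorem hereditary_dichotomy_general (M : Set ℕ)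
    (F : Set (Finset ℕ)) (hF : Hereditary F)
    (ξ : Ordinal.{0})
    (𝓛 : Set (Finset ℕ)) (h𝓛 : IsUniform ξ 𝓛 M)
    (M₁ : Set ℕ) (hM₁ : M₁ ⊆ M) (hM₁inf : M₁.Infinite) :
    ∃ L : Set ℕ, L ⊆ M₁ ∧ L.Infinite ∧
      (famSub 𝓛 ∩ FinSubs L ⊆ F ∨ F ∩ FinSubs L ⊆ famStar 𝓛 \ 𝓛) := by
  obtain ⟨L, hLM₁, hLinf, hsub, hdich⟩ := (h𝓛.denseBelow_famSub_subset_famStar.and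
    (h𝓛.denseBelow_famStar_dichotomy hF) (antitone_inter_finSubs_subset _ _)) M₁ hM₁ hM₁inf
  exact ⟨L, hLM₁, hLinf, hdich.imp_left fun h t ht => h ⟨hsub ht, ht.2⟩⟩

/-- **Theorem 2.12.** If `ℱ` is a hereditary family of finite subsets of `M`
and `ℒ` is a `ξ`-uniform family on `M`, then for every infinite `M₁ ⊆ M` there
is an infinite `L ⊆ M₁` with either `ℒ_* ∩ [L]^{<ω} ⊆ ℱ` or
`ℱ ∩ [L]^{<ω} ⊆ ℒ* \ ℒ`. -/
theorem hereditary_dichotomy (M : Set ℕ) (hM : M.Infinite)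
    (F : Set (Finset ℕ)) (hFM : F ⊆ FinSubs M) (hF : Hereditary F)
    (ξ : Ordinal.{0}) (hξ : ξ.card ≤ Cardinal.aleph0)
    (𝓛 : Set (Finset ℕ)) (h𝓛 : IsUniform ξ 𝓛 M)
    (M₁ : Set ℕ) (hM₁ : M₁ ⊆ M) (hM₁inf : M₁.Infinite) :
    ∃ L : Set ℕ, L ⊆ M₁ ∧ L.Infinite ∧
      (famSub 𝓛 ∩ FinSubs L ⊆ F ∨ F ∩ FinSubs L ⊆ famStar 𝓛 \ 𝓛) :=
  hereditary_dichotomy_general M F hF ξ 𝓛 h𝓛 M₁ hM₁ hM₁inf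
end
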